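/- arXiv:2409.04052 — 11 statements merged into one kernel-verified Lean document; each statement's English description precedes it below -/
import Mathlib

section
/- Let l0, l1, a1 be positive real numbers. Define the complex numbers λ00 = e^{-(1+i)a1(l1+l0)/(l1 l0)} (l0 - l1)/(2 l0) and λ01 = e^{(1+i)a1(l1-l0)/(l1 l0)} (l1 + l0)/(2 l0). Then λ00 + λ01 ≠ 0. -/
/-!
Writing both exponents as `r * (1 + i)` with `r` real, the two summands have moduli
`exp (-s (l1 + l0)) |l0 - l1| / (2 l0)` and `exp (s (l1 - l0)) (l1 + l0) / (2 l0)`, where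
`s = a1 / (l1 l0) > 0`. The second exponent is the larger one and `|l0 - l1| < l1 + l0`, so the
second summand is strictly larger in modulus and the sum cannot vanish.
-/

open Complex

lemma add_ne_zero_of_norm_lt_norm {E : Type*} [SeminormedAddCommGroup E] {a b : E}
    (h : ‖a‖ < ‖b‖) : a + b ≠ 0 := by
  intro hab
  rw [eq_neg_of_add_eq_zero_left hab, norm_neg] at h
  exact lt_irrefl _ h

lemma norm_exp_mul_one_add_I_mul_ofReal (r c : ℝ) :
    ‖exp (r * (1 + I)) * c‖ = Real.exp r * |c| := by
  rw [norm_mul, norm_exp, norm_real, Real.norm_eq_abs]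
  simp

lemma exp_neg_mul_add_mul_abs_sub_lt {s x y : ℝ} (hs : 0 ≤ s) (hx : 0 < x) (hy : 0 < y) :
    Real.exp (-s * (y + x)) * |x - y| < Real.exp (s * (y - x)) * (y + x) := by
  have hexp : Real.exp (-s * (y + x)) ≤ Real.exp (s * (y - x)) :=
    Real.exp_le_exp.mpr (by nlinarith)
  have habs : |x - y| < y + x := abs_sub_lt_iff.mpr ⟨by linarith, by linarith⟩
  exact mul_lt_mul' hexp habs (abs_nonneg _) (Real.exp_pos _)

theorem lambda_sum_ne_zero_one_jump (l0 l1 a1 : ℝ)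
    (hl0 : 0 < l0) (hl1 : 0 < l1) (ha1 : 0 < a1) :
    Complex.exp (-(1 + Complex.I) * a1 * (l1 + l0) / (l1 * l0)) * ((l0 - l1) / (2 * l0))
      + Complex.exp ((1 + Complex.I) * a1 * (l1 - l0) / (l1 * l0)) * ((l1 + l0) / (2 * l0))
      ≠ 0 := by
  set s : ℝ := a1 / (l1 * l0)
  have hs : 0 ≤ s := by positivity
  have hterm₁ : exp (-(1 + I) * a1 * (l1 + l0) / (l1 * l0)) * ((l0 - l1) / (2 * l0))
      = exp ((-s * (l1 + l0) : ℝ) * (1 + I)) * ((l0 - l1) / (2 * l0) : ℝ) := by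
    push_cast [s]; field_simp
  have hterm₂ : exp ((1 + I) * a1 * (l1 - l0) / (l1 * l0)) * ((l1 + l0) / (2 * l0))
      = exp ((s * (l1 - l0) : ℝ) * (1 + I)) * ((l1 + l0) / (2 * l0) : ℝ) := by
    push_cast [s]; field_simp
  rw [hterm₁, hterm₂]
  apply add_ne_zero_of_norm_lt_norm
  have h2l0 : 0 < 2 * l0 := by positivity
  rw [norm_exp_mul_one_add_I_mul_ofReal, norm_exp_mul_one_add_I_mul_ofReal, abs_div, abs_div,
    abs_of_pos h2l0, abs_of_pos (add_pos hl1 hl0), ← mul_div_assoc, ← mul_div_assoc]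
  exact div_lt_div_of_pos_right (exp_neg_mul_add_mul_abs_sub_lt hs hl0 hl1) h2l0
end

section
/- Let l0, l1 be positive real numbers and a1 > 0. Then (l0 - l1)/(l0 + l1) ≠ -e^{(2+2i)a1/l0}, where e^w denotes the complex exponential and i the imaginary unit. -/
open Complex

/-! Since `l0, l1 > 0`, the real number `(l0 - l1)/(l0 + l1)` has modulus `< 1`, whereas
`|e^{(2+2i)a1/l0}| = e^{2 a1/l0} > 1` because `a1, l0 > 0`; so the two sides have different moduli. -/

theorem abs_sub_div_add_lt_one {a b : ℝ} (ha : 0 < a) (hb : 0 < b) : |(a - b) / (a + b)| < 1 := by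
  rw [abs_div, abs_of_pos (add_pos ha hb), div_lt_one (add_pos ha hb), abs_sub_lt_iff]
  constructor <;> linarith

theorem Complex.ne_neg_exp_of_norm_lt_one {w z : ℂ} (hw : ‖w‖ < 1) (hz : 0 ≤ z.re) :
    w ≠ -exp z := by
  rintro rfl
  rw [norm_neg, norm_exp] at hw
  exact (Real.one_le_exp hz).not_gt hw

theorem one_jump_nondegeneracy (l0 l1 a1 : ℝ)
    (hl0 : 0 < l0) (hl1 : 0 < l1) (ha1 : 0 < a1) :
    (((l0 - l1) / (l0 + l1) : ℂ)) ≠ -Complex.exp ((2 + 2 * Complex.I) * a1 / l0) := by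
  have hnorm : ‖(((l0 - l1) / (l0 + l1) : ℂ))‖ < 1 := by
    exact_mod_cast abs_sub_div_add_lt_one hl0 hl1
  have hre : ((2 + 2 * Complex.I) * a1 / l0).re = 2 * a1 / l0 := by
    simp [div_ofReal_re]
  exact ne_neg_exp_of_norm_lt_one hnorm (hre ▸ by positivity)
end

section
/- Let l0, l1, l2 be positive real numbers and 0 < a1 < a2. Define x = e^{-(1+i)a1(l1+l0)/(l0 l1)}, y = e^{(1+i)a1(l0-l1)/(l0 l1)}, c1 = e^{(2+2i)a1/l1}, c2 = e^{(2+2i)a2/l1}, η1 = (l1-l0)(l1-l2), η2 = (l1+l0)(l1-l2), θ1 = (l1-l0)(l1+l2), θ2 = (l1+l0)(l1+l2). Then x(c1 η2 - c2 θ1) + y(-c1 η1 + c2 θ2) ≠ 0. -/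
/-!
Since the second exponential is `x * c1`, the expression equals
`x * (c1 (l1 - l2) A + c2 (l1 + l2) B)` with `A = (l1 + l0) - c1 (l1 - l0)` and
`B = c1 (l1 + l0) - (l1 - l0)`. Now `‖B‖² - ‖A‖² = (‖c1‖² - 1) · 4 l0 l1 > 0`, while
`1 < ‖c1‖ < ‖c2‖` and `|l1 - l2| < l1 + l2`, so the second summand strictly dominates the first
in norm and the sum cannot vanish.
-/

open Complex

theorem add_ne_zero_of_norm_lt {E : Type*} [SeminormedAddGroup E] {u v : E}
    (h : ‖u‖ < ‖v‖) : u + v ≠ 0 := fun huv =>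
  h.not_ge (by rw [eq_neg_of_add_eq_zero_right huv, norm_neg])

theorem normSq_mul_sub_sub_normSq_sub_mul (c : ℂ) (p q : ℝ) :
    normSq (c * p - q) - normSq (p - c * q) = (normSq c - 1) * (p ^ 2 - q ^ 2) := by
  simp only [normSq_apply, sub_re, sub_im, mul_re, mul_im, ofReal_re, ofReal_im]
  ring

theorem norm_sub_mul_lt_norm_mul_sub {c : ℂ} {p q : ℝ} (hc : 1 < ‖c‖) (hqp : |q| < p) :
    ‖(p : ℂ) - c * q‖ < ‖c * p - q‖ := by
  have hc2 : 1 < normSq c := by rw [normSq_eq_norm_sq]; nlinarith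
  have hpq : q ^ 2 < p ^ 2 := sq_lt_sq' (abs_lt.1 hqp).1 (abs_lt.1 hqp).2
  rw [norm_def, norm_def]
  refine Real.sqrt_lt_sqrt (normSq_nonneg _) (sub_pos.1 ?_)
  rw [normSq_mul_sub_sub_normSq_sub_mul]
  exact mul_pos (sub_pos.2 hc2) (sub_pos.2 hpq)

theorem norm_exp_two_add_two_I_mul_div (a l : ℝ) :
    ‖exp ((2 + 2 * I) * a / l)‖ = Real.exp (2 * a / l) := by
  rw [norm_exp]
  congr 1
  simp [div_ofReal_re]

theorem exp_mul_sub_div_mul_eq {a l0 l1 : ℂ} (hl0 : l0 ≠ 0) (hl1 : l1 ≠ 0) :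
    exp ((1 + I) * a * (l0 - l1) / (l0 * l1))
      = exp (-(1 + I) * a * (l1 + l0) / (l0 * l1)) * exp ((2 + 2 * I) * a / l1) := by
  rw [← exp_add]
  congr 1
  field_simp
  ring

theorem two_jump_nondegeneracy (l0 l1 l2 a1 a2 : ℝ)
    (hl0 : 0 < l0) (hl1 : 0 < l1) (hl2 : 0 < l2)
    (ha1 : 0 < a1) (ha12 : a1 < a2) :
    Complex.exp (-(1 + Complex.I) * a1 * (l1 + l0) / (l0 * l1))
        * (Complex.exp ((2 + 2 * Complex.I) * a1 / l1) * ((l1 + l0) * (l1 - l2))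
            - Complex.exp ((2 + 2 * Complex.I) * a2 / l1) * ((l1 - l0) * (l1 + l2)))
      + Complex.exp ((1 + Complex.I) * a1 * (l0 - l1) / (l0 * l1))
        * (-(Complex.exp ((2 + 2 * Complex.I) * a1 / l1) * ((l1 - l0) * (l1 - l2)))
            + Complex.exp ((2 + 2 * Complex.I) * a2 / l1) * ((l1 + l0) * (l1 + l2)))
      ≠ 0 := by
  set x := exp (-(1 + I) * a1 * (l1 + l0) / (l0 * l1))
  set c1 := exp ((2 + 2 * I) * a1 / l1)
  set c2 := exp ((2 + 2 * I) * a2 / l1)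
  have hc1 : 1 < ‖c1‖ := by
    rw [norm_exp_two_add_two_I_mul_div, Real.one_lt_exp_iff]
    positivity
  have hc12 : ‖c1‖ < ‖c2‖ := by
    rw [norm_exp_two_add_two_I_mul_div, norm_exp_two_add_two_I_mul_div, Real.exp_lt_exp]
    gcongr
  have hl : |l1 - l0| < l1 + l0 := abs_sub_lt_iff.2 ⟨by linarith, by linarith⟩
  have hl' : |l1 - l2| < l1 + l2 := abs_sub_lt_iff.2 ⟨by linarith, by linarith⟩
  rw [exp_mul_sub_div_mul_eq (ofReal_ne_zero.2 hl0.ne') (ofReal_ne_zero.2 hl1.ne')]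
  have hfactor : ∀ e1 e2 e3 e4 : ℂ, x * (c1 * (e1 * e2) - c2 * (e3 * e4))
      + x * c1 * (-(c1 * (e3 * e2)) + c2 * (e1 * e4))
      = x * (c1 * e2 * (e1 - c1 * e3) + c2 * e4 * (c1 * e1 - e3)) := by
    intros; ring
  rw [hfactor, ← ofReal_sub, ← ofReal_add, ← ofReal_sub, ← ofReal_add]
  refine mul_ne_zero (exp_ne_zero _) (add_ne_zero_of_norm_lt ?_)
  simp only [norm_mul, norm_real, Real.norm_eq_abs, abs_of_pos (add_pos hl1 hl2)]
  gcongr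
  exact norm_sub_mul_lt_norm_mul_sub hc1 hl
end

section
/- Let l0, l1, l2 be positive real numbers and 0 < a1 < a2. Define c1 = e^{(2+2i)a1/l1}, c2 = e^{(2+2i)a2/l1}, η1 = (l1-l0)(l1-l2), η2 = (l1+l0)(l1-l2), θ1 = (l1-l0)(l1+l2), θ2 = (l1+l0)(l1+l2). Then |c2 θ2 - c1 η1| > |c2 θ1 - c1 η2|, where |·| denotes the complex absolute value. -/
/-! With `x = c₂ (l₁ + l₂)` and `y = c₁ (l₁ - l₂)` the two sides are `‖p x - m y‖` and
`‖m x - p y‖` for `p = l₁ + l₀`, `m = l₁ - l₀`. In any real inner product space the cross terms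
of the squared norms cancel, leaving `(p² - m²)(‖x‖² - ‖y‖²)`, and both factors are positive:
`p² - m² = 4 l₀ l₁` and `‖y‖ = e^{2a₁/l₁} |l₁ - l₂| < e^{2a₂/l₁} (l₁ + l₂) = ‖x‖`. -/

open Complex

section SwapCoefficients

variable {E : Type*} [NormedAddCommGroup E] [InnerProductSpace ℝ E]

theorem norm_smul_sub_smul_sq_sub_swap (p m : ℝ) (x y : E) :
    ‖p • x - m • y‖ ^ 2 - ‖m • x - p • y‖ ^ 2 = (p ^ 2 - m ^ 2) * (‖x‖ ^ 2 - ‖y‖ ^ 2) := by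
  simp only [norm_sub_sq_real, norm_smul, real_inner_smul_left, real_inner_smul_right, mul_pow,
    Real.norm_eq_abs, sq_abs]
  ring

theorem norm_smul_sub_smul_lt_swap {p m : ℝ} {x y : E} (hpm : |m| < |p|) (hxy : ‖y‖ < ‖x‖) :
    ‖m • x - p • y‖ < ‖p • x - m • y‖ := by
  have hpos : 0 < ‖p • x - m • y‖ ^ 2 - ‖m • x - p • y‖ ^ 2 := by
    rw [norm_smul_sub_smul_sq_sub_swap]
    exact mul_pos (sub_pos.2 (sq_lt_sq.2 hpm))
      (sub_pos.2 (pow_lt_pow_left₀ hxy (norm_nonneg y) two_ne_zero))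
  exact lt_of_pow_lt_pow_left₀ 2 (norm_nonneg _) (sub_pos.1 hpos)

end SwapCoefficients

theorem Complex.norm_exp_mul_ofReal_div_ofReal (w : ℂ) (a l : ℝ) :
    ‖exp (w * a / l)‖ = Real.exp (w.re * a / l) := by
  rw [norm_exp, div_ofReal_re, re_mul_ofReal]

theorem two_jump_claim1_general (l0 l1 l2 a1 a2 : ℝ)
    (hl0 : 0 < l0) (hl1 : 0 < l1) (hl2 : 0 < l2)
    (ha12 : a1 < a2) :
    ‖Complex.exp ((2 + 2 * Complex.I) * a2 / l1) * ((l1 + l0) * (l1 + l2))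
        - Complex.exp ((2 + 2 * Complex.I) * a1 / l1) * ((l1 - l0) * (l1 - l2))‖
      > ‖Complex.exp ((2 + 2 * Complex.I) * a2 / l1) * ((l1 - l0) * (l1 + l2))
        - Complex.exp ((2 + 2 * Complex.I) * a1 / l1) * ((l1 + l0) * (l1 - l2))‖ := by
  set x := Complex.exp ((2 + 2 * Complex.I) * a2 / l1) * ((l1 + l2 : ℝ) : ℂ)
  set y := Complex.exp ((2 + 2 * Complex.I) * a1 / l1) * ((l1 - l2 : ℝ) : ℂ)
  have hnorm (a r : ℝ) : ‖Complex.exp ((2 + 2 * Complex.I) * a / l1) * (r : ℂ)‖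
      = Real.exp (2 * a / l1) * |r| := by
    rw [norm_mul, Complex.norm_exp_mul_ofReal_div_ofReal, Complex.norm_real, Real.norm_eq_abs]
    norm_num
  have hxy : ‖y‖ < ‖x‖ := by
    rw [hnorm, hnorm, abs_of_pos (by positivity : 0 < l1 + l2)]
    exact mul_lt_mul'' (Real.exp_lt_exp.2 (by gcongr))
      (abs_sub_lt_of_nonneg_of_lt hl1.le (by linarith) hl2.le (by linarith))
      (Real.exp_pos _).le (abs_nonneg _)
  have hpm : |l1 - l0| < |l1 + l0| := by
    rw [abs_of_pos (by positivity : 0 < l1 + l0)]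
    exact abs_sub_lt_of_nonneg_of_lt hl1.le (by linarith) hl0.le (by linarith)
  have key := norm_smul_sub_smul_lt_swap hpm hxy
  simp only [x, y, Complex.real_smul] at key
  push_cast at key
  refine Eq.trans_lt ?_ (key.trans_eq ?_) <;> congr 1 <;> ring

theorem two_jump_claim1 (l0 l1 l2 a1 a2 : ℝ)
    (hl0 : 0 < l0) (hl1 : 0 < l1) (hl2 : 0 < l2)
    (ha1 : 0 < a1) (ha12 : a1 < a2) :
    ‖Complex.exp ((2 + 2 * Complex.I) * a2 / l1) * ((l1 + l0) * (l1 + l2))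
        - Complex.exp ((2 + 2 * Complex.I) * a1 / l1) * ((l1 - l0) * (l1 - l2))‖
      > ‖Complex.exp ((2 + 2 * Complex.I) * a2 / l1) * ((l1 - l0) * (l1 + l2))
        - Complex.exp ((2 + 2 * Complex.I) * a1 / l1) * ((l1 + l0) * (l1 - l2))‖ :=
  two_jump_claim1_general l0 l1 l2 a1 a2 hl0 hl1 hl2 ha12
end

section
/- Let l, l' be positive real numbers, let α, β̂ be nonzero complex numbers, and let w, x, y, z be complex numbers satisfying |x + z| > (|w + y|/|α|²) · (|l' - l|/(l' + l)). Define x' = w α⁻¹ β̂ (l' - l) - x α β̂ (l' + l) and z' = y α⁻¹ β̂ (l' - l) - z α β̂ (l' + l). Then x' + z' ≠ 0. -/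
open Complex

/-! Factoring out `βh`, `x' + z'` is the difference of `(w + y) α⁻¹ (l' - l)` and
`(x + z) α (l' + l)`; multiplying the hypothesis by `‖α‖ (l' + l)` shows that these two terms
have different norms. -/

lemma norm_mul_inv_mul_ofReal_lt {𝕜 : Type*} [RCLike 𝕜] {a u v : 𝕜} {d s : ℝ}
    (ha : a ≠ 0) (hs : 0 < s) (h : ‖u‖ / ‖a‖ ^ 2 * (|d| / s) < ‖v‖) :
    ‖u * a⁻¹ * (d : 𝕜)‖ < ‖v * a * (s : 𝕜)‖ := by
  have ha' : 0 < ‖a‖ := norm_pos_iff.mpr ha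
  calc ‖u * a⁻¹ * (d : 𝕜)‖ = ‖u‖ / ‖a‖ ^ 2 * (|d| / s) * (‖a‖ * s) := by
        simp only [norm_mul, norm_inv, RCLike.norm_ofReal]
        field_simp
    _ < ‖v‖ * (‖a‖ * s) := mul_lt_mul_of_pos_right h (by positivity)
    _ = ‖v * a * (s : 𝕜)‖ := by
        simp only [norm_mul, RCLike.norm_ofReal, abs_of_pos hs]
        ring

theorem induction_step_nonvanishing (l l' : ℝ) (hl : 0 < l) (hl' : 0 < l')
    (α βh : ℂ) (hα : α ≠ 0) (hβh : βh ≠ 0)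
    (w x y z : ℂ)
    (h : ‖x + z‖ >
      (‖w + y‖ / ‖α‖ ^ 2) * (|l' - l| / (l' + l))) :
    (w * α⁻¹ * βh * ((l' : ℂ) - l) - x * α * βh * ((l' : ℂ) + l))
      + (y * α⁻¹ * βh * ((l' : ℂ) - l) - z * α * βh * ((l' : ℂ) + l)) ≠ 0 := by
  have hfactor : (w * α⁻¹ * βh * ((l' : ℂ) - l) - x * α * βh * ((l' : ℂ) + l))
      + (y * α⁻¹ * βh * ((l' : ℂ) - l) - z * α * βh * ((l' : ℂ) + l))
      = βh * ((w + y) * α⁻¹ * ((l' - l : ℝ) : ℂ) - (x + z) * α * ((l' + l : ℝ) : ℂ)) := by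
    push_cast
    ring
  have hlt := norm_mul_inv_mul_ofReal_lt hα (add_pos hl' hl) h
  rw [hfactor]
  exact mul_ne_zero hβh (sub_ne_zero.mpr (ne_of_apply_ne norm hlt.ne))
end

section
/- Fix n ≥ 1, real numbers 0 = a0 < a1 < ... < a_n, and l0 > 0. For k = 1,...,n and positive reals l1,...,l_n define the 2×2 complex matrices A_k = [[α_{k-1}, α̂_{k-1}],[l_{k-1} α_{k-1}, -l_{k-1} α̂_{k-1}]] and B_k = [[β_k, β̂_k],[l_k β_k, -l_k β̂_k]], where α_k = e^{(1+i)a_{k+1}/l_k}, α̂_k = e^{-(1+i)a_{k+1}/l_k}, β_k = e^{(1+i)a_k/l_k}, β̂_k = e^{-(1+i)a_k/l_k}, and let [[w_n, x_n],[y_n, z_n]] = A_1⁻¹B_1 A_2⁻¹B_2 ⋯ A_n⁻¹B_n. Then there exist positive numbers ε_0, ..., ε_{n-1}, where each ε_k is allowed to depend on a_1,...,a_{k+1} and on l_0,...,l_k, such that whenever the positive reals l_1,...,l_n satisfy |l_{k+1} - l_k|/(l_{k+1} + l_k) ≤ ε_k for every k = 0,...,n-1, one has x_n + z_n ≠ 0.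 (Formally: there exists a function assigning to each k and each choice of l_0,...,l_k a positive ε_k with this property.) -/
/-!
`A_k` and `B_k` are the values at `s = l_{k-1}` and `s = l_k` of one matrix function `T(s)` of
`a_k`, with `det T(s) = -2s ≠ 0`. By continuity of `T`, the factor `A_k⁻¹ B_k` is as close to the
identity as we like once `l_k` is relatively close to `l_{k-1}`, how close depending only on `a_k`
and `l_{k-1}`. Asking the `k`-th factor to lie within `2^{-(k+3)}` of the identity in the `ℓ^∞`
operator norm keeps the whole product within `1/2` of the identity, so `x_n` is close to `0` and
`z_n` close to `1`.
-/

open Complex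

/-- The transfer matrix `A_k` (for `k = 1, ..., n`), with entries built from
`α_{k-1} = e^{(1+i)a_k/l_{k-1}}` and `α̂_{k-1} = e^{-(1+i)a_k/l_{k-1}}`. -/
noncomputable def transferA (a l : ℕ → ℝ) (k : ℕ) : Matrix (Fin 2) (Fin 2) ℂ :=
  !![Complex.exp ((1 + Complex.I) * a k / l (k - 1)),
      Complex.exp (-(1 + Complex.I) * a k / l (k - 1));
    (l (k - 1) : ℂ) * Complex.exp ((1 + Complex.I) * a k / l (k - 1)),
      -((l (k - 1) : ℂ)) * Complex.exp (-(1 + Complex.I) * a k / l (k - 1))]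

/-- The transfer matrix `B_k` (for `k = 1, ..., n`), with entries built from
`β_k = e^{(1+i)a_k/l_k}` and `β̂_k = e^{-(1+i)a_k/l_k}`. -/
noncomputable def transferB (a l : ℕ → ℝ) (k : ℕ) : Matrix (Fin 2) (Fin 2) ℂ :=
  !![Complex.exp ((1 + Complex.I) * a k / l k),
      Complex.exp (-(1 + Complex.I) * a k / l k);
    (l k : ℂ) * Complex.exp ((1 + Complex.I) * a k / l k),
      -((l k : ℂ)) * Complex.exp (-(1 + Complex.I) * a k / l k)]

/-- The ordered product `A_1⁻¹B_1 A_2⁻¹B_2 ⋯ A_n⁻¹B_n`. -/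
noncomputable def transferProd (a l : ℕ → ℝ) (n : ℕ) : Matrix (Fin 2) (Fin 2) ℂ :=
  ((List.range n).map (fun j => (transferA a l (j + 1))⁻¹ * transferB a l (j + 1))).prod

open scoped Matrix.Norms.Operator

noncomputable def transferMat (x s : ℝ) : Matrix (Fin 2) (Fin 2) ℂ :=
  !![exp ((1 + I) * x / s), exp (-(1 + I) * x / s);
    (s : ℂ) * exp ((1 + I) * x / s), -(s : ℂ) * exp (-(1 + I) * x / s)]

theorem transferA_eq (a l : ℕ → ℝ) (k : ℕ) : transferA a l k = transferMat (a k) (l (k - 1)) :=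
  rfl

theorem transferB_eq (a l : ℕ → ℝ) (k : ℕ) : transferB a l k = transferMat (a k) (l k) :=
  rfl

theorem det_transferMat (x s : ℝ) : (transferMat x s).det = -2 * s := by
  have h : exp ((1 + I) * x / s) * exp (-(1 + I) * x / s) = 1 := by
    rw [← exp_add, neg_mul, neg_div, add_neg_cancel, exp_zero]
  rw [transferMat, Matrix.det_fin_two_of]
  linear_combination (-2 * (s : ℂ)) * h

theorem continuousAt_transferMat (x : ℝ) {s : ℝ} (hs : s ≠ 0) :
    ContinuousAt (transferMat x) s := by
  have hs' : (s : ℂ) ≠ 0 := ofReal_ne_zero.2 hs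
  unfold transferMat
  fun_prop (disch := exact hs')

theorem abs_sub_le_of_abs_sub_div_add_le {s t ε : ℝ} (hst : 0 < t + s) (hε : ε ≤ 1 / 2)
    (h : |t - s| / (t + s) ≤ ε) : |t - s| ≤ 4 * ε * s := by
  have hε₀ : 0 ≤ ε := (div_nonneg (abs_nonneg _) hst.le).trans h
  have := (div_le_iff₀ hst).1 h
  nlinarith [mul_le_mul_of_nonneg_left (le_abs_self (t - s)) hε₀,
    mul_le_mul_of_nonneg_right hε (abs_nonneg (t - s))]

theorem exists_norm_inv_mul_transferMat_sub_one_le (x : ℝ) {s δ : ℝ} (hs : 0 < s) (hδ : 0 < δ) :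
    ∃ ε > 0, ∀ t, 0 < t → |t - s| / (t + s) ≤ ε →
      ‖(transferMat x s)⁻¹ * transferMat x t - 1‖ ≤ δ := by
  have hunit : IsUnit (transferMat x s).det := by
    rw [det_transferMat]
    exact (mul_ne_zero (by norm_num) (ofReal_ne_zero.2 hs.ne')).isUnit
  have hcont : ContinuousAt (fun t => (transferMat x s)⁻¹ * transferMat x t) s :=
    continuousAt_const.mul (continuousAt_transferMat x hs.ne')
  obtain ⟨η, hη, hball⟩ := Metric.continuousAt_iff.1 hcont δ hδ
  refine ⟨min (1 / 2) (η / (8 * s)), by positivity, fun t ht hrel => ?_⟩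
  have hdist : dist t s < η := by
    calc dist t s = |t - s| := Real.dist_eq t s
      _ ≤ 4 * min (1 / 2) (η / (8 * s)) * s :=
        abs_sub_le_of_abs_sub_div_add_le (by linarith) (min_le_left _ _) hrel
      _ ≤ 4 * (η / (8 * s)) * s := by gcongr; exact min_le_right _ _
      _ < η := by field_simp; linarith
  simpa [dist_eq_norm, Matrix.nonsing_inv_mul _ hunit] using (hball hdist).le

theorem norm_prod_range_sub_one_le {R : Type*} [SeminormedRing R] [NormOneClass R] (f : ℕ → R)
    (n : ℕ) (hf : ∀ k < n, ‖f k - 1‖ ≤ (1 / 2) ^ (k + 3)) :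
    ‖((List.range n).map f).prod - 1‖ ≤ (1 - (1 / 2) ^ n) / 2 := by
  induction n with
  | zero => simp
  | succ n ih =>
    set P := ((List.range n).map f).prod
    have hP : ‖P - 1‖ ≤ (1 - (1 / 2) ^ n) / 2 := ih fun k hk => hf k (hk.trans n.lt_succ_self)
    have hfn : ‖f n - 1‖ ≤ (1 / 2) ^ (n + 3) := hf n n.lt_succ_self
    have hnorm_fn : ‖f n‖ ≤ (1 / 2) ^ (n + 3) + 1 := by
      calc ‖f n‖ = ‖(f n - 1) + 1‖ := by rw [sub_add_cancel]
        _ ≤ ‖f n - 1‖ + 1 := (norm_add_le _ _).trans_eq (by rw [norm_one])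
        _ ≤ (1 / 2) ^ (n + 3) + 1 := by linarith
    rw [List.range_succ, List.map_append, List.prod_append, List.map_singleton,
      List.prod_singleton]
    calc ‖P * f n - 1‖ = ‖(P - 1) * f n + (f n - 1)‖ := by congr 1; noncomm_ring
      _ ≤ ‖P - 1‖ * ‖f n‖ + ‖f n - 1‖ := (norm_add_le _ _).trans
        (by gcongr; exact norm_mul_le _ _)
      _ ≤ (1 - (1 / 2) ^ n) / 2 * ((1 / 2) ^ (n + 3) + 1) + (1 / 2) ^ (n + 3) := by
        gcongr
        exact (norm_nonneg _).trans hP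
      _ ≤ (1 - (1 / 2) ^ (n + 1)) / 2 := by
        rw [pow_add, pow_add]
        nlinarith [pow_nonneg (by norm_num : (0 : ℝ) ≤ 1 / 2) n]

theorem Matrix.norm_entry_le_linfty_opNorm {m n α : Type*} [Fintype m] [Fintype n]
    [SeminormedAddCommGroup α] (A : Matrix m n α) (i : m) (j : n) : ‖A i j‖ ≤ ‖A‖ := by
  rw [Matrix.linfty_opNorm_def]
  exact_mod_cast (Finset.single_le_sum (fun j _ => zero_le) (Finset.mem_univ j)).trans
    (Finset.le_sup (f := fun i => ∑ j, ‖A i j‖₊) (Finset.mem_univ i))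

theorem add_apply_zero_one_ne_zero_of_norm_sub_one_lt {P : Matrix (Fin 2) (Fin 2) ℂ}
    (hP : ‖P - 1‖ < 1 / 2) : P 0 1 + P 1 1 ≠ 0 := by
  intro h
  have h01 : ‖P 0 1‖ ≤ ‖P - 1‖ := by simpa using (P - 1).norm_entry_le_linfty_opNorm 0 1
  have h11 : ‖P 1 1 - 1‖ ≤ ‖P - 1‖ := by simpa using (P - 1).norm_entry_le_linfty_opNorm 1 1
  have hsum : P 0 1 + (P 1 1 - 1) = -1 := by linear_combination h
  have : (1 : ℝ) ≤ ‖P 0 1‖ + ‖P 1 1 - 1‖ := by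
    simpa [hsum] using norm_add_le (P 0 1) (P 1 1 - 1)
  linarith

theorem general_unique_solvability_general (n : ℕ) (a : ℕ → ℝ) (l0 : ℝ) :
    ∃ ε : (k : ℕ) → (Fin (k + 1) → ℝ) → ℝ,
      (∀ (k : ℕ) (ls : Fin (k + 1) → ℝ), 0 < ε k ls) ∧
      ∀ l : ℕ → ℝ, l 0 = l0 → (∀ k ≤ n, 0 < l k) →
        (∀ k < n, |l (k + 1) - l k| / (l (k + 1) + l k) ≤ ε k (fun j => l j)) →
        transferProd a l n 0 1 + transferProd a l n 1 1 ≠ 0 := by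
  have step : ∀ (k : ℕ) (s : ℝ), ∃ ε > 0, 0 < s → ∀ t, 0 < t → |t - s| / (t + s) ≤ ε →
      ‖(transferMat (a (k + 1)) s)⁻¹ * transferMat (a (k + 1)) t - 1‖ ≤ (1 / 2) ^ (k + 3) := by
    intro k s
    by_cases hs : 0 < s
    · obtain ⟨ε, hε, h⟩ := exists_norm_inv_mul_transferMat_sub_one_le (a (k + 1)) hs
        (by positivity : (0 : ℝ) < (1 / 2) ^ (k + 3))
      exact ⟨ε, hε, fun _ => h⟩
    · exact ⟨1, one_pos, fun h => absurd h hs⟩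
  choose ε hε_pos hε using step
  refine ⟨fun k ls => ε k (ls (Fin.last k)), fun k ls => hε_pos k _, fun l _ hl hrel => ?_⟩
  apply add_apply_zero_one_ne_zero_of_norm_sub_one_lt
  refine (norm_prod_range_sub_one_le _ n fun k hk => ?_).trans_lt ?_
  · rw [transferA_eq, transferB_eq]
    exact hε k (l k) (hl k hk.le) (l (k + 1)) (hl (k + 1) hk) (hrel k hk)
  · linarith [pow_pos (by norm_num : (0 : ℝ) < 1 / 2) n]

theorem general_unique_solvability (n : ℕ) (hn : 1 ≤ n) (a : ℕ → ℝ)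
    (ha0 : a 0 = 0) (ha : ∀ k < n, a k < a (k + 1)) (l0 : ℝ) (hl0 : 0 < l0) :
    ∃ ε : (k : ℕ) → (Fin (k + 1) → ℝ) → ℝ,
      (∀ (k : ℕ) (ls : Fin (k + 1) → ℝ), 0 < ε k ls) ∧
      ∀ l : ℕ → ℝ, l 0 = l0 → (∀ k ≤ n, 0 < l k) →
        (∀ k < n, |l (k + 1) - l k| / (l (k + 1) + l k) ≤ ε k (fun j => l j)) →
        transferProd a l n 0 1 + transferProd a l n 1 1 ≠ 0 :=
  general_unique_solvability_general n a l0
end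

section
/- Let l, h > 0 and ψg ∈ ℂ. Then there exist unique complex numbers A, B, D satisfying the three equations A + B + ψg = 0, A e^{(1+i)h} + B e^{-(1+i)h} = D e^{-(1+i)h/l}, and A e^{(1+i)h} - B e^{-(1+i)h} = -l D e^{-(1+i)h/l}. -/
open Complex

/-- The first term dominates in modulus: `(1 + l) exp (re z) ≥ 1 + l > |1 - l| ≥ |1 - l| exp (-re z)`. -/
theorem one_add_mul_exp_add_one_sub_mul_exp_neg_ne_zero {l : ℝ} (hl : 0 < l) {z : ℂ}
    (hz : 0 ≤ z.re) : (1 + (l : ℂ)) * exp z + (1 - l) * exp (-z) ≠ 0 := by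
  have hgrow : 1 + l ≤ ‖(1 + (l : ℂ)) * exp z‖ := by
    rw [← ofReal_one, ← ofReal_add, norm_mul, norm_exp, norm_real, Real.norm_of_nonneg (by linarith)]
    exact le_mul_of_one_le_right (by linarith) (Real.one_le_exp hz)
  have hdecay : ‖(1 - (l : ℂ)) * exp (-z)‖ ≤ |1 - l| := by
    rw [← ofReal_one, ← ofReal_sub, norm_mul, norm_exp, norm_real, Real.norm_eq_abs, neg_re]
    exact mul_le_of_le_one_right (abs_nonneg _) (Real.exp_le_one_iff.mpr (by linarith))
  have hgap : |1 - l| < 1 + l := abs_lt.mpr ⟨by linarith, by linarith⟩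
  intro hsum
  rw [add_eq_zero_iff_eq_neg.mp hsum, norm_neg] at hgrow
  linarith

/-- Up to the factor `-2E`, the determinant of this system is `(1 + l) u + (1 - l) v`. -/
theorem existsUnique_interface_coefficients {K : Type*} [Field K] [NeZero (2 : K)] {u v E l ψ : K}
    (huv : u * v = 1) (hE : E ≠ 0) (hdet : (1 + l) * u + (1 - l) * v ≠ 0) :
    ∃! p : K × K × K,
      p.1 + p.2.1 + ψ = 0 ∧ p.1 * u + p.2.1 * v = p.2.2 * E ∧
      p.1 * u - p.2.1 * v = -l * p.2.2 * E := by
  set c := (1 + l) * u + (1 - l) * v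
  have hEc : E * c ≠ 0 := mul_ne_zero hE hdet
  set H := -ψ / (E * c)
  have hH : H * (E * c) = -ψ := div_mul_cancel₀ _ hEc
  refine ⟨((1 - l) * H * E * v, (1 + l) * H * E * u, 2 * H), ⟨?_, ?_, ?_⟩, ?_⟩
  · linear_combination hH
  · linear_combination 2 * H * E * huv
  · linear_combination -2 * l * H * E * huv
  rintro ⟨a, b, d⟩ ⟨hsurface, hcont, hflux⟩
  have h2a : 2 * a = (1 - l) * d * E * v := by
    linear_combination v * hcont + v * hflux - 2 * a * huv
  have h2b : 2 * b = (1 + l) * d * E * u := by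
    linear_combination u * hcont - u * hflux - 2 * b * huv
  have hd : d = 2 * H := mul_right_cancel₀ hEc <| by
    linear_combination 2 * hsurface - h2a - h2b - 2 * hH
  subst hd
  have ha : a = (1 - l) * H * E * v := mul_left_cancel₀ two_ne_zero <| by
    linear_combination h2a
  have hb : b = (1 + l) * H * E * u := mul_left_cancel₀ two_ne_zero <| by
    linear_combination h2b
  rw [ha, hb]

theorem one_jump_coefficients_existUnique (l h : ℝ) (hl : 0 < l) (hh : 0 < h) (ψg : ℂ) :
    ∃! p : ℂ × ℂ × ℂ,
      p.1 + p.2.1 + ψg = 0 ∧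
      p.1 * Complex.exp ((1 + Complex.I) * h) + p.2.1 * Complex.exp (-(1 + Complex.I) * h)
        = p.2.2 * Complex.exp (-(1 + Complex.I) * h / l) ∧
      p.1 * Complex.exp ((1 + Complex.I) * h) - p.2.1 * Complex.exp (-(1 + Complex.I) * h)
        = -(l : ℂ) * p.2.2 * Complex.exp (-(1 + Complex.I) * h / l) := by
  have hre : 0 ≤ ((1 + I) * h).re := by simpa using hh.le
  simp only [neg_mul (1 + I)]
  refine existsUnique_interface_coefficients ?_ (exp_ne_zero _)
    (one_add_mul_exp_add_one_sub_mul_exp_neg_ne_zero hl hre)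
  rw [← exp_add, add_neg_cancel, exp_zero]
end

section
/- Let l, h > 0 and ψg ∈ ℂ, and set d = 1 + e^{(2+2i)h} - l + e^{(2+2i)h} l. Then d ≠ 0, and the complex numbers A = ψg (l-1)/d, B = -ψg e^{(2+2i)h}(l+1)/d, D = -2 ψg e^{(1+i)h + (1+i)h/l}/d satisfy A + B + ψg = 0, A e^{(1+i)h} + B e^{-(1+i)h} = D e^{-(1+i)h/l}, and A e^{(1+i)h} - B e^{-(1+i)h} = -l D e^{-(1+i)h/l}. -/
/-!
With `a = exp((1+i)h)` and `b = exp((1+i)h/l)` the three identities are rational identities in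
`a`, `b`, `l`, `ψg`, valid as soon as `a, b, d ≠ 0`. And `d = (1 - l) + a²(1 + l)` cannot vanish:
`|a²| = e^{2h} > 1`, so the second term has norm `> 1 + l > |1 - l|`.
-/

open Complex

lemma one_add_sub_add_mul_ne_zero {z : ℂ} {l : ℝ} (hz : 1 < ‖z‖) (hl : 0 < l) :
    1 + z - l + z * l ≠ 0 := by
  intro hzero
  have hnorm : ‖z‖ * (1 + l) = |l - 1| := by
    have hz : z * ((1 + l : ℝ) : ℂ) = ((l - 1 : ℝ) : ℂ) := by
      push_cast
      linear_combination hzero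
    have := congrArg norm hz
    rwa [norm_mul, norm_real, norm_real, Real.norm_eq_abs, Real.norm_eq_abs,
      abs_of_pos (by linarith : 0 < 1 + l)] at this
  have hsub : |l - 1| < 1 + l := abs_sub_lt_iff.mpr ⟨by linarith, by linarith⟩
  nlinarith

theorem one_jump_coefficient_identities {K : Type*} [Field K] {l a b ψ d : K}
    (ha : a ≠ 0) (hb : b ≠ 0) (hd : d = 1 + a ^ 2 - l + a ^ 2 * l) (hd0 : d ≠ 0) :
    ψ * (l - 1) / d + -(ψ * a ^ 2 * (l + 1)) / d + ψ = 0 ∧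
    ψ * (l - 1) / d * a + -(ψ * a ^ 2 * (l + 1)) / d * a⁻¹ = -(2 * ψ * (a * b)) / d * b⁻¹ ∧
    ψ * (l - 1) / d * a - -(ψ * a ^ 2 * (l + 1)) / d * a⁻¹
      = -l * (-(2 * ψ * (a * b)) / d) * b⁻¹ := by
  refine ⟨?_, ?_, ?_⟩ <;> field_simp
  · linear_combination ψ * hd
  · ring
  · ring

theorem one_jump_explicit_coefficients (l h : ℝ) (hl : 0 < l) (hh : 0 < h) (ψg : ℂ)
    (d A B D : ℂ)
    (hd : d = 1 + Complex.exp ((2 + 2 * Complex.I) * h) - l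
        + Complex.exp ((2 + 2 * Complex.I) * h) * l)
    (hA : A = ψg * ((l : ℂ) - 1) / d)
    (hB : B = -(ψg * Complex.exp ((2 + 2 * Complex.I) * h) * ((l : ℂ) + 1)) / d)
    (hD : D = -(2 * ψg * Complex.exp ((1 + Complex.I) * h + (1 + Complex.I) * h / l)) / d) :
    d ≠ 0 ∧
    A + B + ψg = 0 ∧
    A * Complex.exp ((1 + Complex.I) * h) + B * Complex.exp (-(1 + Complex.I) * h)
      = D * Complex.exp (-(1 + Complex.I) * h / l) ∧
    A * Complex.exp ((1 + Complex.I) * h) - B * Complex.exp (-(1 + Complex.I) * h)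
      = -(l : ℂ) * D * Complex.exp (-(1 + Complex.I) * h / l) := by
  set a := exp ((1 + I) * h)
  set b := exp ((1 + I) * h / l)
  have hsq : exp ((2 + 2 * I) * h) = a ^ 2 := by rw [← exp_nat_mul]; ring_nf
  have hinv_a : exp (-(1 + I) * h) = a⁻¹ := by rw [← exp_neg]; ring_nf
  have hinv_b : exp (-(1 + I) * h / l) = b⁻¹ := by rw [← exp_neg]; ring_nf
  have hprod : exp ((1 + I) * h + (1 + I) * h / l) = a * b := exp_add _ _
  have hd0 : d ≠ 0 := by
    rw [hd]
    refine one_add_sub_add_mul_ne_zero ?_ hl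
    rw [norm_exp, Real.one_lt_exp_iff]
    simpa using hh
  rw [hsq] at hd hB
  rw [hprod] at hD
  subst hA hB hD
  rw [hinv_a, hinv_b]
  exact ⟨hd0, one_jump_coefficient_identities (exp_ne_zero _) (exp_ne_zero _) hd hd0⟩
end

section
/- For l, h > 0 define F(l,h) = ((1+l)² e^{2h} - (1-l)² e^{-2h} + 2(1-l²) sin(2h)) / ((1+l)² e^{2h} - (1-l)² e^{-2h} - 2(1-l²) sin(2h)). Let d = 1 + e^{(2+2i)h} - l + e^{(2+2i)h} l, A = (l-1)/d, B = -e^{(2+2i)h}(l+1)/d. Then the real part of (1+i)(A - B) is nonzero and Im((1+i)(A - B)) / Re((1+i)(A - B)) = F(l,h). -/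
/-!
With `a = 1 - l`, `b = 1 + l` and `E = e^{(2+2i)h}` one has `d = a + bE` and `A - B = (bE - a)/d`.
Multiplying numerator and denominator by `conj d` gives
`(bE - a) conj d = (b²|E|² - a²) + 2ab Im(E) i = X + Y i`, with `X = b²e^{4h} - a²` and
`Y = 2ab e^{2h} sin 2h`, so `Im/Re` of `(1+i)(A - B)` is `(X + Y)/(X - Y)`, which is `F(l,h)` after
dividing by `e^{2h}`. The real part is positive because `|sin x| ≤ sinh x` controls the cross term:
`X - Y ≥ (b - |a|)(b e^{4h} + |a|) > 0`.
-/

open Complex ComplexConjugate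

theorem Real.abs_sin_le_sinh {x : ℝ} (hx : 0 ≤ x) : |Real.sin x| ≤ Real.sinh x :=
  Real.abs_sin_le_abs.trans ((abs_of_nonneg hx).trans_le (Real.self_le_sinh_iff.mpr hx))

theorem Real.two_mul_exp_mul_abs_sin_le {x : ℝ} (hx : 0 ≤ x) :
    2 * Real.exp x * |Real.sin x| ≤ Real.exp x ^ 2 - 1 :=
  calc 2 * Real.exp x * |Real.sin x| ≤ 2 * Real.exp x * Real.sinh x := by
        gcongr; exact Real.abs_sin_le_sinh hx
    _ = Real.exp x ^ 2 - 1 := by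
        rw [Real.sinh_eq, Real.exp_neg]; field_simp

theorem sq_mul_sq_sub_sq_sub_mul_pos {a b t s : ℝ} (hab : |a| < b) (ht : 0 < t)
    (hs : 2 * t * |s| ≤ t ^ 2 - 1) : 0 < b ^ 2 * t ^ 2 - a ^ 2 - 2 * a * b * (t * s) := by
  have hb : 0 < b := (abs_nonneg a).trans_lt hab
  have hcross : 2 * a * b * (t * s) ≤ |a| * b * (t ^ 2 - 1) :=
    calc 2 * a * b * (t * s) ≤ |a| * b * (2 * t * |s|) := by
          nlinarith [le_abs_self (a * s), abs_mul a s, mul_pos hb ht]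
      _ ≤ |a| * b * (t ^ 2 - 1) := by gcongr
  have hfactor : 0 < (b - |a|) * (b * t ^ 2 + |a|) := by
    have := sub_pos.mpr hab
    positivity
  nlinarith [sq_abs a]

namespace Complex

theorem div_eq_mul_conj_div_normSq (z d : ℂ) : z / d = z * conj d / (normSq d : ℂ) := by
  rw [div_eq_mul_inv, inv_def]; push_cast; ring

theorem sub_mul_conj_add (a b : ℝ) (E : ℂ) :
    (b * E - a) * conj (a + b * E)
      = (b ^ 2 * normSq E - a ^ 2 : ℝ) + (2 * a * b * E.im : ℝ) * I := by
  apply Complex.ext <;> simp [normSq_apply, pow_two] <;> ring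

theorem add_mul_ne_zero_of_sub_ne_zero {a b : ℝ} {E : ℂ}
    (h : b ^ 2 * normSq E - a ^ 2 - 2 * a * b * E.im ≠ 0) : (a : ℂ) + b * E ≠ 0 := by
  intro h0
  have hw := sub_mul_conj_add a b E
  rw [h0, map_zero, mul_zero] at hw
  have hre := congrArg re hw
  have him := congrArg im hw
  simp only [zero_re, zero_im, add_re, add_im, ofReal_re, ofReal_im, re_ofReal_mul,
    im_ofReal_mul, I_re, I_im] at hre him
  exact h (by linarith)

theorem re_one_add_I_mul_sub_div_add (a b : ℝ) (E : ℂ) :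
    ((1 + I) * ((b * E - a) / (a + b * E))).re
      = (b ^ 2 * normSq E - a ^ 2 - 2 * a * b * E.im) / normSq (a + b * E) := by
  rw [div_eq_mul_conj_div_normSq, ← mul_div_assoc, div_ofReal_re, sub_mul_conj_add]
  simp only [mul_re, mul_im, add_re, add_im, one_re, one_im, I_re, I_im, ofReal_re, ofReal_im]
  ring

theorem im_one_add_I_mul_sub_div_add (a b : ℝ) (E : ℂ) :
    ((1 + I) * ((b * E - a) / (a + b * E))).im
      = (b ^ 2 * normSq E - a ^ 2 + 2 * a * b * E.im) / normSq (a + b * E) := by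
  rw [div_eq_mul_conj_div_normSq, ← mul_div_assoc, div_ofReal_im, sub_mul_conj_add]
  simp only [mul_re, mul_im, add_re, add_im, one_re, one_im, I_re, I_im, ofReal_re, ofReal_im]
  ring

end Complex

theorem deflection_angle_tangent_formula (l h : ℝ) (hl : 0 < l) (hh : 0 < h)
    (d A B : ℂ)
    (hd : d = 1 + Complex.exp ((2 + 2 * Complex.I) * h) - l
        + Complex.exp ((2 + 2 * Complex.I) * h) * l)
    (hA : A = ((l : ℂ) - 1) / d)
    (hB : B = -(Complex.exp ((2 + 2 * Complex.I) * h) * ((l : ℂ) + 1)) / d) :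
    ((1 + Complex.I) * (A - B)).re ≠ 0 ∧
    ((1 + Complex.I) * (A - B)).im / ((1 + Complex.I) * (A - B)).re
      = ((1 + l) ^ 2 * Real.exp (2 * h) - (1 - l) ^ 2 * Real.exp (-(2 * h))
          + 2 * (1 - l ^ 2) * Real.sin (2 * h))
        / ((1 + l) ^ 2 * Real.exp (2 * h) - (1 - l) ^ 2 * Real.exp (-(2 * h))
          - 2 * (1 - l ^ 2) * Real.sin (2 * h)) := by
  set E := exp ((2 + 2 * I) * h)
  have hEnorm : normSq E = Real.exp (2 * h) ^ 2 := by rw [normSq_eq_norm_sq, norm_exp]; simp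
  have hEim : E.im = Real.exp (2 * h) * Real.sin (2 * h) := by rw [exp_im]; simp
  have hAB : A - B
      = (((1 + l : ℝ) : ℂ) * E - ((1 - l : ℝ) : ℂ)) / ((1 - l : ℝ) + (1 + l : ℝ) * E) := by
    rw [hA, hB, hd]; push_cast; ring
  have hpos : 0 < (1 + l) ^ 2 * normSq E - (1 - l) ^ 2 - 2 * (1 - l) * (1 + l) * E.im := by
    rw [hEnorm, hEim]
    exact sq_mul_sq_sub_sq_sub_mul_pos (by rw [abs_lt]; constructor <;> linarith) (by positivity)
      (Real.two_mul_exp_mul_abs_sin_le (by positivity))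
  have hN := normSq_pos.mpr (add_mul_ne_zero_of_sub_ne_zero hpos.ne')
  rw [hAB, re_one_add_I_mul_sub_div_add, im_one_add_I_mul_sub_div_add,
    div_div_div_cancel_right₀ hN.ne']
  refine ⟨div_ne_zero hpos.ne' hN.ne', ?_⟩
  rw [hEnorm, hEim]
  conv_rhs => rw [← mul_div_mul_left _ _ (Real.exp_pos (2 * h)).ne']
  congr 1 <;> rw [Real.exp_neg] <;> field_simp <;> ring
end

section
/- For all real l, h > 0, both (1+l)² e^{2h} - (1-l)² e^{-2h} + 2(1-l²) sin(2h) > 0 and (1+l)² e^{2h} - (1-l)² e^{-2h} - 2(1-l²) sin(2h) > 0. -/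
theorem deflection_tangent_positive (l h : ℝ) (hl : 0 < l) (hh : 0 < h) :
    0 < (1 + l) ^ 2 * Real.exp (2 * h) - (1 - l) ^ 2 * Real.exp (-(2 * h))
        + 2 * (1 - l ^ 2) * Real.sin (2 * h) ∧
    0 < (1 + l) ^ 2 * Real.exp (2 * h) - (1 - l) ^ 2 * Real.exp (-(2 * h))
        - 2 * (1 - l ^ 2) * Real.sin (2 * h) := by
  set x := 2 * h with hx
  have hx0 : 0 < x := by positivity
  have hsinh : x ≤ Real.sinh x := Real.self_le_sinh_iff.mpr hx0.le
  rw [Real.sinh_eq] at hsinh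
  have hs1 : Real.sin x ≤ x := Real.sin_le hx0.le
  have hs2 : -x ≤ Real.sin x := by
    have h1 : |Real.sin x| < |x| := Real.abs_sin_lt_abs hx0.ne'
    rw [abs_of_pos hx0] at h1
    have := neg_abs_le (Real.sin x)
    linarith
  have he2 : 0 < Real.exp (-x) := Real.exp_pos _
  have he1 : 0 < Real.exp x := Real.exp_pos _
  constructor <;>
    nlinarith [sq_nonneg l, sq_nonneg (1 - l), sq_nonneg (1 + l), mul_pos hl he1,
      mul_pos hl he2, mul_le_mul_of_nonneg_left hs1 (sq_nonneg l),
      mul_le_mul_of_nonneg_left hs2 (sq_nonneg l), mul_pos hl hx0]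
end

section
/- The function h ↦ (sinh(2h) + sin(2h)) / (sinh(2h) - sin(2h)) tends to +∞ as h → 0⁺, and the function h ↦ (sinh(2h) - sin(2h)) / (sinh(2h) + sin(2h)) tends to 0 as h → 0⁺. Moreover both functions tend to 1 as h → ∞. -/
/-!
Both functions are governed by the ratio `q = sin x / sinh x` (with `x = 2h`): the second one is
`(1 - q) / (1 + q)` and the first is its reciprocal. Since `sin` and `sinh` both have derivative
`1` at the origin, `q → 1` as `x → 0`, so the second function tends to `0`, through positive values
because `|sin x| < sinh x` for `x > 0`; its reciprocal therefore tends to `+∞`. As `x → ∞`, `sin`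
stays bounded while `sinh` is unbounded, so `q → 0` and both functions tend to `1`.
-/

open Filter Topology Real

theorem Filter.Tendsto.sub_div_add_of_tendsto_div {α 𝕜 : Type*} [Field 𝕜] [TopologicalSpace 𝕜]
    [IsTopologicalDivisionRing 𝕜] {l : Filter α} {a b : α → 𝕜} {t : 𝕜}
    (hb : Tendsto (fun x => b x / a x) l (𝓝 t)) (ha : ∀ᶠ x in l, a x ≠ 0) (ht : 1 + t ≠ 0) :
    Tendsto (fun x => (a x - b x) / (a x + b x)) l (𝓝 ((1 - t) / (1 + t))) := by
  refine ((tendsto_const_nhds.sub hb).div (tendsto_const_nhds.add hb) ht).congr' ?_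
  filter_upwards [ha] with x hx
  rw [Pi.div_apply, one_sub_div hx, one_add_div hx, div_div_div_cancel_right₀ hx]

lemma Real.tendsto_sin_div_sinh_nhdsNE_zero :
    Tendsto (fun x => sin x / sinh x) (𝓝[≠] 0) (𝓝 1) := by
  have hsin := hasDerivAt_iff_tendsto_slope.mp (hasDerivAt_sin 0)
  have hsinh := hasDerivAt_iff_tendsto_slope.mp (hasDerivAt_sinh 0)
  have hquot := hsin.div hsinh (by simp)
  rw [cos_zero, cosh_zero, div_one] at hquot
  refine hquot.congr' ?_
  filter_upwards [self_mem_nhdsWithin] with x hx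
  simp only [slope_fun_def, sin_zero, sinh_zero, vsub_eq_sub, sub_zero, smul_eq_mul, Pi.div_apply]
  exact mul_div_mul_left _ _ (inv_ne_zero hx)

lemma Real.tendsto_sinh_atTop : Tendsto sinh atTop atTop :=
  tendsto_atTop_mono' atTop ((eventually_ge_atTop 0).mono fun _ hx => self_le_sinh_iff.mpr hx)
    tendsto_id

lemma Real.tendsto_sin_div_sinh_atTop : Tendsto (fun x => sin x / sinh x) atTop (𝓝 0) :=
  isBoundedUnder_le_mul_tendsto_zero
    (isBoundedUnder_of ⟨1, fun x => by simpa using abs_sin_le_one x⟩)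
    tendsto_sinh_atTop.inv_tendsto_atTop

lemma Real.abs_sin_lt_sinh {x : ℝ} (hx : 0 < x) : |sin x| < sinh x :=
  calc |sin x| ≤ |x| := abs_sin_le_abs
    _ = x := abs_of_pos hx
    _ < sinh x := self_lt_sinh_iff.mpr hx

lemma tendsto_const_mul_nhdsGT_zero {c : ℝ} (hc : 0 < c) :
    Tendsto (fun x => c * x) (𝓝[>] 0) (𝓝[>] 0) :=
  tendsto_nhdsWithin_iff.mpr
    ⟨by simpa using ((continuous_const_mul c).tendsto 0).mono_left nhdsWithin_le_nhds,
      eventually_mem_nhdsWithin.mono fun _ hx => mul_pos hc (Set.mem_Ioi.mp hx)⟩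

lemma Real.tendsto_sinh_sub_sin_div_sinh_add_sin_nhdsGT_zero :
    Tendsto (fun x => (sinh x - sin x) / (sinh x + sin x)) (𝓝[>] 0) (𝓝[>] 0) := by
  have hsinh : ∀ᶠ x in 𝓝[>] (0 : ℝ), sinh x ≠ 0 :=
    eventually_mem_nhdsWithin.mono fun x hx => (sinh_pos_iff.mpr hx).ne'
  have hlim := ((tendsto_sin_div_sinh_nhdsNE_zero.mono_left (nhdsGT_le_nhdsNE 0))
    |>.sub_div_add_of_tendsto_div hsinh (by norm_num))
  rw [sub_self, zero_div] at hlim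
  refine tendsto_nhdsWithin_iff.mpr ⟨hlim, eventually_mem_nhdsWithin.mono fun x hx => ?_⟩
  obtain ⟨hlow, hhigh⟩ := abs_lt.mp (abs_sin_lt_sinh hx)
  exact div_pos (sub_pos.mpr hhigh) (neg_lt_iff_pos_add'.mp hlow)

lemma Real.tendsto_sinh_sub_sin_div_sinh_add_sin_atTop :
    Tendsto (fun x => (sinh x - sin x) / (sinh x + sin x)) atTop (𝓝 1) := by
  have hsinh : ∀ᶠ x in atTop, sinh x ≠ 0 :=
    (eventually_gt_atTop 0).mono fun x hx => (sinh_pos_iff.mpr hx).ne'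
  simpa using tendsto_sin_div_sinh_atTop.sub_div_add_of_tendsto_div hsinh (by norm_num)

theorem extreme_deflection_limits_in_h :
    Filter.Tendsto
      (fun h : ℝ => (Real.sinh (2 * h) + Real.sin (2 * h))
        / (Real.sinh (2 * h) - Real.sin (2 * h)))
      (nhdsWithin 0 (Set.Ioi 0)) Filter.atTop ∧
    Filter.Tendsto
      (fun h : ℝ => (Real.sinh (2 * h) - Real.sin (2 * h))
        / (Real.sinh (2 * h) + Real.sin (2 * h)))
      (nhdsWithin 0 (Set.Ioi 0)) (nhds 0) ∧
    Filter.Tendsto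
      (fun h : ℝ => (Real.sinh (2 * h) + Real.sin (2 * h))
        / (Real.sinh (2 * h) - Real.sin (2 * h)))
      Filter.atTop (nhds 1) ∧
    Filter.Tendsto
      (fun h : ℝ => (Real.sinh (2 * h) - Real.sin (2 * h))
        / (Real.sinh (2 * h) + Real.sin (2 * h)))
      Filter.atTop (nhds 1) := by
  have hzero := tendsto_sinh_sub_sin_div_sinh_add_sin_nhdsGT_zero.comp
    (tendsto_const_mul_nhdsGT_zero two_pos)
  have hinf := tendsto_sinh_sub_sin_div_sinh_add_sin_atTop.comp
    (tendsto_id.const_mul_atTop (two_pos : (0 : ℝ) < 2))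
  refine ⟨?_, tendsto_nhdsWithin_iff.mp hzero |>.1, ?_, hinf⟩
  · simpa [Function.comp_def, Pi.inv_def, inv_div] using hzero.inv_tendsto_nhdsGT_zero
  · simpa [Function.comp_def, Pi.inv_def, inv_div] using hinf.inv₀ one_ne_zero
end
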